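/- Let G be a nonelementary v-critical finite simple graph of order n with γ_R(G) = 4. If V_1 := {v ∈ V(G) : deg(v) = n − 3}, then |V_1| ≥ n/2. -/

import Mathlib

/-! Deleting a vertex `v` leaves a graph on at least four vertices with Roman domination number
`3`. A minimum Roman function there takes the value `2` on one vertex `u`, `1` on one vertex `w`
and `0` elsewhere, so `u` is adjacent to every vertex other than `u`, `v`, `w`. If `u` were
adjacent to `v` (or `w`), putting `2` on `u`, `1` on `w` (or `v`) and `0` elsewhere would give
a Roman function of weight `3` on `G`. Hence `u` has degree `n - 3` and `v` is one of its two
non-neighbours. Choosing such a `u` for each `v` maps `V(G)` into `V₁` with fibres of size at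
most `2`. -/

open SimpleGraph

/-- A Roman domination function on `G`. -/
def IsRomanFn {V : Type*} (G : SimpleGraph V) (r : V → Fin 3) : Prop :=
  ∀ u, r u = 0 → ∃ v, G.Adj u v ∧ r v = 2

/-- The weight of a Roman domination function. -/
noncomputable def romanWeight {V : Type*} [Fintype V] (r : V → Fin 3) : ℕ :=
  ∑ u, (r u : ℕ)

/-- The Roman domination number of `G`. -/
noncomputable def romanNumber {V : Type*} [Fintype V] (G : SimpleGraph V) : ℕ :=
  sInf {w | ∃ r : V → Fin 3, IsRomanFn G r ∧ romanWeight r = w}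

/-- `G` is vertex critical. -/
def VCritical {V : Type*} [Fintype V] [DecidableEq V] (G : SimpleGraph V) : Prop :=
  ∀ v : V, romanNumber (G.induce {u | u ≠ v}) = romanNumber G - 1

/-- `G` is edge critical. -/
def ECritical {V : Type*} [Fintype V] [DecidableEq V] (G : SimpleGraph V) : Prop :=
  VCritical G ∧ ∀ e ∈ G.edgeSet, ¬ VCritical (G.deleteEdges {e})

/-- `G` is Roman saturated. -/
def RomanSaturated {V : Type*} [Fintype V] (G : SimpleGraph V) : Prop :=
  ∀ v w : V, v ≠ w → ¬ G.Adj v w →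
    romanNumber (G ⊔ SimpleGraph.fromEdgeSet {s(v, w)}) = romanNumber G - 1

/-- `v` is a cut vertex of `G`. -/
def IsCutVertex {V : Type*} [Fintype V] [DecidableEq V] (G : SimpleGraph V) (v : V) : Prop :=
  Nat.card G.ConnectedComponent < Nat.card (G.induce {u | u ≠ v}).ConnectedComponent

section Complement

variable {V : Type*} [Fintype V]

theorem ncard_neighborSet_add_ncard_neighborSet_compl (G : SimpleGraph V) (v : V) :
    (G.neighborSet v).ncard + (Gᶜ.neighborSet v).ncard + 1 = Fintype.card V := by
  classical
  simp only [Set.ncard_eq_toFinset_card', Set.toFinset_card, card_neighborSet_eq_degree]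
  have := G.degree_compl (v := v)
  have := G.degree_lt_card_verts v
  omega

theorem card_le_mul_ncard_of_forall_exists_adj (H : SimpleGraph V) {S : Set V} {k : ℕ}
    (hdeg : ∀ u ∈ S, (H.neighborSet u).ncard ≤ k) (hS : ∀ v, ∃ u ∈ S, H.Adj u v) :
    Fintype.card V ≤ k * S.ncard := by
  classical
  choose f hfS hf using hS
  rw [Set.ncard_eq_toFinset_card', ← Finset.card_univ]
  refine Finset.card_le_mul_card_image_of_maps_to (fun v _ => Set.mem_toFinset.2 (hfS v)) k
    fun u hu => ?_
  have hfiber : Finset.univ.filter (f · = u) ⊆ (H.neighborSet u).toFinset := by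
    intro v hv
    rw [Finset.mem_filter] at hv
    simpa [← hv.2] using hf v
  calc _ ≤ (H.neighborSet u).toFinset.card := Finset.card_le_card hfiber
    _ ≤ k := by
      rw [← Set.ncard_eq_toFinset_card']
      exact hdeg u (Set.mem_toFinset.1 hu)

end Complement

section Roman

variable {V : Type*} [Fintype V] (G : SimpleGraph V)

theorem romanNumber_le_romanWeight {r : V → Fin 3} (hr : IsRomanFn G r) :
    romanNumber G ≤ romanWeight r :=
  Nat.sInf_le ⟨r, hr, rfl⟩

theorem exists_isRomanFn_romanWeight_eq_romanNumber :
    ∃ r : V → Fin 3, IsRomanFn G r ∧ romanWeight r = romanNumber G :=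
  Nat.sInf_mem (s := {w | ∃ r : V → Fin 3, IsRomanFn G r ∧ romanWeight r = w})
    ⟨_, fun _ => 1, fun _ h => by simp at h, rfl⟩

theorem romanNumber_le_three_of_adj {u w : V} (huw : u ≠ w)
    (hadj : ∀ y, y ≠ u → y ≠ w → G.Adj u y) : romanNumber G ≤ 3 := by
  classical
  let r : V → Fin 3 := fun y => if y = u then 2 else if y = w then 1 else 0
  have hr : IsRomanFn G r := by
    intro y hy
    refine ⟨u, (hadj y ?_ ?_).symm, if_pos rfl⟩ <;> rintro rfl <;> simp [r, huw.symm] at hy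
  have hval : ∀ y, (r y : ℕ) = (if y = u then 2 else 0) + (if y = w then 1 else 0) := by
    intro y
    by_cases hyu : y = u <;> by_cases hyw : y = w <;> simp_all [r]
  have hweight : romanWeight r = 3 := by
    simp only [romanWeight, hval, Finset.sum_add_distrib, Finset.sum_ite_eq', Finset.mem_univ,
      if_true]
  exact hweight ▸ romanNumber_le_romanWeight G hr

theorem exists_adj_of_romanNumber_le_three (h : romanNumber G ≤ 3)
    (hcard : 3 < Fintype.card V) :
    ∃ u w, u ≠ w ∧ ∀ y, y ≠ u → y ≠ w → G.Adj u y := by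
  classical
  obtain ⟨r, hr, hweight⟩ := exists_isRomanFn_romanWeight_eq_romanNumber G
  have hsum (s : Finset V) : ∑ y ∈ s, (r y : ℕ) ≤ 3 :=
    (Finset.sum_le_sum_of_subset (Finset.subset_univ s)).trans (hweight.trans_le h)
  obtain ⟨x, hx⟩ : ∃ x, r x = 0 := by
    by_contra! hpos
    have hcard_le := Finset.card_nsmul_le_sum Finset.univ (fun y => (r y : ℕ)) 1
      fun y _ => Nat.one_le_iff_ne_zero.2 (Fin.val_ne_zero_iff.2 (hpos y))
    rw [smul_eq_mul, mul_one, Finset.card_univ] at hcard_le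
    linarith [hsum Finset.univ]
  obtain ⟨u, -, hu⟩ := hr x hx
  have hpair (y z : V) (hyu : y ≠ u) (hzu : z ≠ u) (hyz : y ≠ z) : (r y : ℕ) + r z ≤ 1 := by
    have := hsum {u, y, z}
    rw [Finset.sum_insert (by simp [hyu.symm, hzu.symm]), Finset.sum_pair hyz, hu] at this
    omega
  have hle (z : V) (hzu : z ≠ u) : (r z : ℕ) ≤ 1 := by
    have := hsum {u, z}
    rw [Finset.sum_pair hzu.symm, hu] at this
    omega
  obtain ⟨w, hwu, hzero⟩ : ∃ w, w ≠ u ∧ ∀ y, y ≠ u → y ≠ w → r y = 0 := by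
    by_cases hw : ∃ w, w ≠ u ∧ r w ≠ 0
    · obtain ⟨w, hwu, hw⟩ := hw
      refine ⟨w, hwu, fun y hyu hyw => ?_⟩
      have := hpair y w hyu hwu hyw
      omega
    · push Not at hw
      have : Nontrivial V := Fintype.one_lt_card_iff_nontrivial.1 (by omega)
      obtain ⟨w, hwu⟩ := exists_ne u
      exact ⟨w, hwu, fun y hyu _ => hw y hyu⟩
  refine ⟨u, w, hwu.symm, fun y hyu hyw => ?_⟩
  obtain ⟨z, hyz, hz⟩ := hr y (hzero y hyu hyw)
  obtain rfl : z = u := by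
    by_contra hzu
    have := hle z hzu
    omega
  exact hyz.symm

theorem exists_compl_adj_ncard_neighborSet_compl_eq_two [DecidableEq V] (hG : 3 < romanNumber G)
    (v : V) (hv : romanNumber (G.induce {u | u ≠ v}) ≤ 3) (hcard : 4 < Fintype.card V) :
    ∃ u, Gᶜ.Adj u v ∧ (Gᶜ.neighborSet u).ncard = 2 := by
  have hcard' : 3 < Fintype.card {u | u ≠ v} := by
    simp only [Set.coe_ofPred, Fintype.card_subtype_compl, Fintype.card_unique]
    omega
  obtain ⟨⟨u, huv⟩, ⟨w, hwv⟩, huw, hadj⟩ := exists_adj_of_romanNumber_le_three _ hv hcard'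
  replace huw : u ≠ w := fun h => huw (Subtype.ext h)
  have hadj' (y : V) (hyu : y ≠ u) (hyv : y ≠ v) (hyw : y ≠ w) : G.Adj u y :=
    hadj ⟨y, hyv⟩ (fun h => hyu congr($h.1)) (fun h => hyw congr($h.1))
  have hnuv : ¬ G.Adj u v := fun h => hG.not_ge <| romanNumber_le_three_of_adj G huw
    fun y hyu hyw => if hyv : y = v then hyv ▸ h else hadj' y hyu hyv hyw
  have hnuw : ¬ G.Adj u w := fun h => hG.not_ge <| romanNumber_le_three_of_adj G huv
    fun y hyu hyv => if hyw : y = w then hyw ▸ h else hadj' y hyu hyv hyw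
  have hcompl : Gᶜ.neighborSet u = {v, w} := by
    ext y
    simp only [mem_neighborSet, compl_adj, Set.mem_insert_iff, Set.mem_singleton_iff]
    constructor
    · rintro ⟨hyu, hy⟩
      by_contra! hvw
      exact hy (hadj' y hyu.symm hvw.1 hvw.2)
    · rintro (rfl | rfl)
      exacts [⟨huv, hnuv⟩, ⟨huw, hnuw⟩]
  exact ⟨u, (compl_adj G u v).2 ⟨huv, hnuv⟩, hcompl ▸ Set.ncard_pair (Ne.symm hwv)⟩

end Roman

/-- in a nonelementary v-critical graph of order `n` with γ_R(G) = 4, at least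
half of the vertices have degree `n - 3`. -/
theorem half_vertices_have_degree {V : Type*} [Fintype V] [DecidableEq V]
    (G : SimpleGraph V) (hne : romanNumber G < Fintype.card V) (hv : VCritical G)
    (h4 : romanNumber G = 4) :
    Fintype.card V ≤ 2 * {v : V | (G.neighborSet v).ncard = Fintype.card V - 3}.ncard := by
  refine card_le_mul_ncard_of_forall_exists_adj Gᶜ (fun u hu => ?_) fun v => ?_
  · have := ncard_neighborSet_add_ncard_neighborSet_compl G u
    rw [Set.mem_ofPred_eq] at hu
    omega
  · obtain ⟨u, huv, hu⟩ := exists_compl_adj_ncard_neighborSet_compl_eq_two G (by omega) v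
      (by rw [hv v, h4]) (by omega)
    have := ncard_neighborSet_add_ncard_neighborSet_compl G u
    exact ⟨u, by rw [Set.mem_ofPred_eq]; omega, huv⟩
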